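/- arXiv:2404.09723 — 4 statements merged into one kernel-verified Lean document; each statement's English description precedes it below -/
import Mathlib

section
/- Let M be a symmetric positive definite real d×d matrix, and for t ∈ ℝ let Φ_t be the linear map on ℝᵈ × ℝᵈ given by Φ_t(x,p) = (cos(t)·x + sin(t)·M⁻¹p, cos(t)·p − sin(t)·M x). Then the determinant of Φ_t equals 1 for every t ∈ ℝ; in particular the flow preserves Lebesgue measure on phase space. -/
open Real Matrix MeasureTheory

/-- The exact Fourier acceleration flow has determinant one for every `t`;
in particular it preserves the Lebesgue measure on phase space. -/
theorem efa_flow_det_eq_one {d : ℕ} (M : Matrix (Fin d) (Fin d) ℝ)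
    (hMsymm : M.IsSymm) (hMpos : M.PosDef)
    (Φ : ℝ → ((Fin d → ℝ) × (Fin d → ℝ)) →ₗ[ℝ] ((Fin d → ℝ) × (Fin d → ℝ)))
    (hΦ : ∀ t xp, Φ t xp =
      (Real.cos t • xp.1 + Real.sin t • (M⁻¹ *ᵥ xp.2),
       Real.cos t • xp.2 - Real.sin t • (M *ᵥ xp.1))) :
    ∀ t : ℝ, LinearMap.det (Φ t) = 1 ∧
      Measure.map (Φ t) volume = volume := by
  have hdetM : IsUnit M.det := isUnit_iff_ne_zero.2 (ne_of_gt hMpos.det_pos)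
  have hinv1 : M⁻¹ * M = 1 := Matrix.nonsing_inv_mul M hdetM
  have hinv2 : M * M⁻¹ = 1 := Matrix.mul_nonsing_inv M hdetM
  have hMiM : ∀ v : Fin d → ℝ, M⁻¹ *ᵥ (M *ᵥ v) = v := by
    intro v; rw [Matrix.mulVec_mulVec, hinv1, Matrix.one_mulVec]
  have hMMi : ∀ v : Fin d → ℝ, M *ᵥ (M⁻¹ *ᵥ v) = v := by
    intro v; rw [Matrix.mulVec_mulVec, hinv2, Matrix.one_mulVec]
  -- composition law
  have hcomp : ∀ t s : ℝ, (Φ t).comp (Φ s) = Φ (t + s) := by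
    intro t s
    apply LinearMap.ext
    intro xp
    simp only [LinearMap.comp_apply, hΦ, Real.cos_add, Real.sin_add]
    obtain ⟨x, p⟩ := xp
    simp only [Matrix.mulVec_add, Matrix.mulVec_smul, Matrix.mulVec_sub,
      hMiM, hMMi, smul_add, smul_sub, smul_smul]
    rw [Prod.mk.injEq]
    constructor <;> module
  -- Φ 0 = id
  have h0 : Φ 0 = LinearMap.id := by
    apply LinearMap.ext
    intro xp
    simp [hΦ]
  -- the momentum-flip map
  set P : ((Fin d → ℝ) × (Fin d → ℝ)) →ₗ[ℝ] ((Fin d → ℝ) × (Fin d → ℝ)) :=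
    LinearMap.prodMap LinearMap.id (-LinearMap.id) with hPdef
  have hPapply : ∀ xp : (Fin d → ℝ) × (Fin d → ℝ), P xp = (xp.1, -xp.2) := by
    intro xp; rfl
  have hPP : P.comp P = LinearMap.id := by
    apply LinearMap.ext; intro xp
    simp [hPapply]
  -- conjugation by P reverses time
  have hPΦ : ∀ t : ℝ, P.comp ((Φ t).comp P) = Φ (-t) := by
    intro t
    apply LinearMap.ext
    intro xp
    obtain ⟨x, p⟩ := xp
    simp only [LinearMap.comp_apply, hPapply, hΦ, Real.cos_neg, Real.sin_neg]
    simp only [Matrix.mulVec_neg, smul_neg, neg_smul]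
    rw [Prod.mk.injEq]
    constructor <;> module
  have hdetP2 : LinearMap.det P * LinearMap.det P = 1 := by
    rw [← LinearMap.det_comp, hPP, LinearMap.det_id]
  have hdetneg : ∀ t : ℝ, LinearMap.det (Φ (-t)) = LinearMap.det (Φ t) := by
    intro t
    rw [← hPΦ t, LinearMap.det_comp, LinearMap.det_comp]
    linear_combination LinearMap.det (Φ t) * hdetP2
  have hsq : ∀ t : ℝ, LinearMap.det (Φ t) * LinearMap.det (Φ t) = 1 := by
    intro t
    have := hcomp t (-t)
    rw [add_neg_cancel, h0] at this
    have hdet := congrArg LinearMap.det this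
    rw [LinearMap.det_comp, LinearMap.det_id, hdetneg t] at hdet
    exact hdet
  have hnonneg : ∀ t : ℝ, 0 ≤ LinearMap.det (Φ t) := by
    intro t
    have := hcomp (t / 2) (t / 2)
    rw [add_halves] at this
    have hdet := congrArg LinearMap.det this
    rw [LinearMap.det_comp] at hdet
    rw [← hdet]
    exact mul_self_nonneg _
  intro t
  have hdet1 : LinearMap.det (Φ t) = 1 := by
    nlinarith [hsq t, hnonneg t]
  refine ⟨hdet1, ?_⟩
  haveI : (volume : Measure ((Fin d → ℝ) × (Fin d → ℝ))).IsAddHaarMeasure :=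
    Measure.prod.instIsAddHaarMeasure (volume : Measure (Fin d → ℝ)) (volume : Measure (Fin d → ℝ))
  rw [MeasureTheory.Measure.map_linearMap_addHaar_eq_smul_addHaar volume
      (by rw [hdet1]; norm_num : LinearMap.det (Φ t) ≠ 0), hdet1]
  simp
end

section
/- As T → 0⁺, the function T ↦ 1/(1 − (cos T)^{π/(2T)}) − 4/(πT) − 1/2 is O(T); equivalently, (1 − (cos T)^{π/(2T)})⁻¹ = 4/(πT) + 1/2 + O(T) in a right neighbourhood of 0. -/
open Real Filter Asymptotics

set_option maxHeartbeats 1000000 in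
/-- Short-trajectory expansion of the autocorrelation rescaling factor:
`(1 − (cos T)^(π/(2T)))⁻¹ = 4/(πT) + 1/2 + O(T)` as `T → 0⁺`. -/
theorem short_trajectory_expansion :
    (fun T : ℝ => 1 / (1 - Real.cos T ^ (π / (2 * T))) - 4 / (π * T) - 1 / 2)
      =O[nhdsWithin 0 (Set.Ioi 0)] (fun T : ℝ => T) := by
  rw [isBigO_iff]
  refine ⟨50, ?_⟩
  have hmem : Set.Ioo (0:ℝ) (2/5) ∈ nhdsWithin 0 (Set.Ioi 0) :=
    Ioo_mem_nhdsGT_of_mem (by constructor <;> norm_num)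
  filter_upwards [hmem] with T hT
  obtain ⟨hT0, hT1⟩ := hT
  have hTne : T ≠ 0 := ne_of_gt hT0
  have hπ3 : (3:ℝ) < π := pi_gt_three
  have hπ4 : π < 3.15 := pi_lt_d2
  obtain ⟨x, hxdef⟩ : ∃ x : ℝ, x = π * T / 4 := ⟨_, rfl⟩
  have hx0 : 0 < x := by rw [hxdef]; positivity
  have hxle : x ≤ 0.32 := by rw [hxdef]; nlinarith
  have hxT : 3/4 * T ≤ x := by rw [hxdef]; nlinarith
  have hxT' : x ≤ T := by rw [hxdef]; nlinarith
  -- cosine bounds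
  have habsT : |T| ≤ 1 := by rw [abs_of_pos hT0]; linarith
  have hcb := Real.cos_bound habsT
  rw [abs_of_pos hT0] at hcb
  rw [abs_le] at hcb
  have hc1 : 1 - T^2/2 - 5/96 * T^4 ≤ Real.cos T := by nlinarith [hcb.1]
  have hc2 : Real.cos T ≤ 1 - T^2/2 + 5/96 * T^4 := by nlinarith [hcb.2]
  have hT2 : T^2 ≤ 4/25 := by nlinarith
  have hT4 : T^4 ≤ 16/625 := by nlinarith [sq_nonneg T, sq_nonneg (T^2)]
  have hcpos : 0 < Real.cos T := by nlinarith [hc1, hT2, hT4]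
  -- logarithm bounds
  obtain ⟨L, hLdef⟩ : ∃ L : ℝ, L = Real.log (Real.cos T) := ⟨_, rfl⟩
  have hLub : L ≤ -T^2/2 + T^4 := by
    have := Real.log_le_sub_one_of_pos hcpos
    rw [hLdef]; nlinarith
  have hLlb : -T^2/2 - T^4 ≤ L := by
    have h1 := Real.log_le_sub_one_of_pos (inv_pos.2 hcpos)
    rw [Real.log_inv] at h1
    have hci : Real.cos T * (Real.cos T)⁻¹ = 1 := mul_inv_cancel₀ (ne_of_gt hcpos)
    have hipos : 0 < (Real.cos T)⁻¹ := inv_pos.2 hcpos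
    have h2 : (Real.cos T)⁻¹ ≤ 1 + T^2/2 + T^4 := by
      have hcm : 1 ≤ Real.cos T * (1 + T^2/2 + T^4) := by nlinarith [hc1, hT2, hT4]
      calc (Real.cos T)⁻¹ = (Real.cos T)⁻¹ * 1 := by ring
        _ ≤ (Real.cos T)⁻¹ * (Real.cos T * (1 + T^2/2 + T^4)) :=
            mul_le_mul_of_nonneg_left hcm (le_of_lt hipos)
        _ = (Real.cos T * (Real.cos T)⁻¹) * (1 + T^2/2 + T^4) := by ring
        _ = 1 + T^2/2 + T^4 := by rw [hci, one_mul]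
    rw [hLdef]; linarith
  -- the exponent
  obtain ⟨u, hudef⟩ : ∃ u : ℝ, u = π / (2 * T) * L := ⟨_, rfl⟩
  have hcoef : 0 < π / (2 * T) := by positivity
  have hu1 : u ≤ -x + 2 * T^3 := by
    have h := mul_le_mul_of_nonneg_left hLub (le_of_lt hcoef)
    have heq : π / (2 * T) * (-T^2/2 + T^4) = -(π * T / 4) + (π / 2) * T^3 := by
      field_simp; ring
    rw [heq] at h
    have : (π/2) * T^3 ≤ 2 * T^3 := by nlinarith [pow_pos hT0 3]
    rw [hudef, hxdef]; linarith
  have hu2 : -x - 2 * T^3 ≤ u := by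
    have h := mul_le_mul_of_nonneg_left hLlb (le_of_lt hcoef)
    have heq : π / (2 * T) * (-T^2/2 - T^4) = -(π * T / 4) - (π / 2) * T^3 := by
      field_simp; ring
    rw [heq] at h
    have : (π/2) * T^3 ≤ 2 * T^3 := by nlinarith [pow_pos hT0 3]
    rw [hudef, hxdef]; linarith
  have hT3 : T^3 ≤ (4/25) * T := by nlinarith
  have hu_neg : u < 0 := by nlinarith
  have hg : Real.cos T ^ (π / (2 * T)) = Real.exp u := by
    rw [Real.rpow_def_of_pos hcpos, hudef, hLdef, mul_comm]
  -- lower bound on D = 1 - exp u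
  obtain ⟨D, hDdef⟩ : ∃ D : ℝ, D = 1 - Real.exp u := ⟨_, rfl⟩
  have hD0 : 0 < D := by
    have : Real.exp u < 1 := Real.exp_lt_one_iff.2 hu_neg
    rw [hDdef]; linarith
  have hkey : Real.exp u * (1 - u) ≤ 1 := by
    have h1 : 1 - u ≤ Real.exp (-u) := by
      have := Real.add_one_le_exp (-u); linarith
    have h2 : Real.exp u * (1 - u) ≤ Real.exp u * Real.exp (-u) :=
      mul_le_mul_of_nonneg_left h1 (le_of_lt (Real.exp_pos u))
    rw [← Real.exp_add] at h2
    simpa using h2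
  have hDlb : T/5 ≤ D := by
    have h3 : -u ≤ D * (1 - u) := by rw [hDdef]; nlinarith
    -- 1 - u ≤ 1.5, -u ≥ x - 2T³ ≥ 0.43 T
    nlinarith [hD0, hu1, hu2, hT3, hxT, hxle]
  -- numerator bound
  have hexpb := Real.exp_bound (x := -x) (by rw [abs_neg, abs_of_pos hx0]; linarith)
      (n := 4) (by norm_num)
  have hsum : ∑ m ∈ Finset.range 4, (-x) ^ m / (Nat.factorial m : ℝ)
      = 1 - x + x^2/2 - x^3/6 := by
    simp [Finset.sum_range_succ, Nat.factorial]
    ring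
  rw [hsum, abs_neg, abs_of_pos hx0] at hexpb
  norm_num [Nat.factorial] at hexpb
  rw [abs_le] at hexpb
  have hphi : |x - 2 + (2 + x) * Real.exp (-x)| ≤ x^3 := by
    obtain ⟨r, hrdef⟩ : ∃ r : ℝ, r = Real.exp (-x) - (1 - x + x^2/2 - x^3/6) := ⟨_, rfl⟩
    rw [← hrdef] at hexpb
    have hA : (2 + x) * r ≤ (2 + x) * (x^4 * (5/96)) :=
      mul_le_mul_of_nonneg_left hexpb.2 (by linarith)
    have hB : (2 + x) * (-(x^4 * (5/96))) ≤ (2 + x) * r :=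
      mul_le_mul_of_nonneg_left hexpb.1 (by linarith)
    have hid : x - 2 + (2 + x) * Real.exp (-x) = x^3/6 - x^4/6 + (2 + x) * r := by
      rw [hrdef]; ring
    rw [hid, abs_le]
    constructor <;>
      nlinarith [hA, hB, hx0, hxle, pow_nonneg hx0.le 4, pow_nonneg hx0.le 3]
  have hdiff : |Real.exp u - Real.exp (-x)| ≤ 4 * T^3 := by
    have heq2 : Real.exp u - Real.exp (-x) = Real.exp (-x) * (Real.exp (u + x) - 1) := by
      have h0 : Real.exp (-x) * Real.exp (u + x) = Real.exp u := by
        rw [← Real.exp_add]; congr 1; ring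
      rw [mul_sub, h0, mul_one]
    have habs : |u + x| ≤ 2 * T^3 := by rw [abs_le]; constructor <;> linarith
    have habs1 : |u + x| ≤ 1 := by
      have : 2 * T^3 ≤ 1 := by nlinarith
      linarith
    have h4 := Real.abs_exp_sub_one_le habs1
    have hex1 : Real.exp (-x) ≤ 1 := Real.exp_le_one_iff.2 (by linarith)
    rw [heq2, abs_mul, Real.abs_exp]
    calc Real.exp (-x) * |Real.exp (u + x) - 1| ≤ 1 * (2 * |u + x|) := by
          apply mul_le_mul hex1 h4 (abs_nonneg _) (by norm_num)
      _ ≤ 4 * T^3 := by rw [one_mul]; linarith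
  have hN : |x - 2 + (2 + x) * Real.exp u| ≤ 13 * T^3 := by
    have hsplit : x - 2 + (2 + x) * Real.exp u
        = (x - 2 + (2 + x) * Real.exp (-x)) + (2 + x) * (Real.exp u - Real.exp (-x)) := by
      ring
    rw [hsplit]
    calc |x - 2 + (2 + x) * Real.exp (-x) + (2 + x) * (Real.exp u - Real.exp (-x))|
        ≤ |x - 2 + (2 + x) * Real.exp (-x)| + |(2 + x)| * |Real.exp u - Real.exp (-x)| := by
          rw [← abs_mul]; exact abs_add_le _ _
      _ ≤ x^3 + 3 * (4 * T^3) := by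
          have h5 : |(2 + x)| = 2 + x := abs_of_pos (by linarith)
          have h6 : |(2+x)| * |Real.exp u - Real.exp (-x)| ≤ 3 * (4 * T^3) := by
            rw [h5]
            apply mul_le_mul (by linarith) hdiff (abs_nonneg _) (by norm_num)
          linarith [hphi]
      _ ≤ 13 * T^3 := by
          have : x^3 ≤ T^3 := pow_le_pow_left₀ hx0.le hxT' 3
          linarith
  -- put it together
  have hDne : D ≠ 0 := ne_of_gt hD0
  have hxne : x ≠ 0 := ne_of_gt hx0
  have hπne : π ≠ 0 := by positivity
  have heq3 : 1 / (1 - Real.cos T ^ (π / (2 * T))) - 4 / (π * T) - 1 / 2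
      = (x - 2 + (2 + x) * Real.exp u) / (2 * x * D) := by
    rw [hg, ← hDdef]
    have hDeq : Real.exp u = 1 - D := by rw [hDdef]; ring
    rw [hDeq]
    rw [hxdef]
    field_simp
    ring
  rw [heq3, Real.norm_eq_abs, Real.norm_eq_abs, abs_div, abs_of_pos hT0]
  have hden : |2 * x * D| = 2 * x * D := abs_of_pos (by positivity)
  rw [hden, div_le_iff₀ (by positivity)]
  -- |N| ≤ 10 T³  and  50 T · 2xD ≥ 50 T · 2 · (3T/4) · (T/5) = 15 T³
  have hxD : (3/4 * T) * (T/5) ≤ x * D :=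
    mul_le_mul hxT hDlb (by positivity) hx0.le
  have hxD' := mul_le_mul_of_nonneg_left hxD hT0.le
  have h7 : 13 * T^3 ≤ 50 * T * (2 * x * D) := by linarith [hxD']
  linarith [hN]
end

section
/- Let d ≥ 1, β > 0, N_c ≥ 1, and k ∈ ℝᵈ, and let M_G(k) be the complex d×d matrix with entries M_G(k)_{μν} = (2β/N_c)·[δ_{μν}·∑_{ρ=1}^{d} sin²(k_ρ/2) − exp(i(k_μ − k_ν)/2)·sin(k_μ/2)·sin(k_ν/2)]. Then the vector y⁰_k ∈ ℂᵈ with components (y⁰_k)_μ = exp(i k_μ/2)·sin(k_μ/2) satisfies M_G(k)·y⁰_k = 0. -/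
open Matrix Complex

/-!
Writing `y = y⁰_k`, the phase `e^{i(k_μ-k_ν)/2}` factors as `e^{ik_μ/2} · conj e^{ik_ν/2}`, so
`M_G(k) = (2β/N_c) (‖y‖² · 1 - y y*)` with `‖y‖² = ∑_ρ sin²(k_ρ/2)` because the phases are
unimodular; and `(‖y‖² · 1 - y y*) y = ‖y‖² y - y (y* y) = 0`.
-/

theorem Matrix.dotProduct_smul_one_sub_vecMulVec_mulVec_self {n R : Type*} [Fintype n]
    [DecidableEq n] [CommRing R] (v y : n → R) :
    ((v ⬝ᵥ y) • (1 : Matrix n n R) - vecMulVec y v) *ᵥ y = 0 := by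
  rw [sub_mulVec, smul_mulVec, one_mulVec, vecMulVec_mulVec, op_smul_eq_smul, sub_self]

theorem Complex.exp_I_mul_ofReal_sub_div_two (a b : ℝ) :
    exp (I * ((a - b : ℝ) : ℂ) / 2) = exp (I * a / 2) * star (exp (I * b / 2)) := by
  rw [Complex.star_def, ← Complex.exp_conj, ← Complex.exp_add]
  congr 1
  simp only [map_div₀, map_mul, conj_I, conj_ofReal, map_ofNat, ofReal_sub]
  ring

theorem Complex.exp_I_mul_ofReal_div_two_mul_star (a : ℝ) :
    exp (I * a / 2) * star (exp (I * a / 2)) = 1 := by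
  rw [← exp_I_mul_ofReal_sub_div_two, sub_self, ofReal_zero, mul_zero, zero_div, exp_zero]

theorem Complex.star_ofReal (x : ℝ) : star (x : ℂ) = x := conj_ofReal x

theorem gauge_matrix_zero_mode_general {d : ℕ} (β : ℝ)
    (Nc : ℕ) (k : Fin d → ℝ)
    (MG : Matrix (Fin d) (Fin d) ℂ)
    (hMG : ∀ μ ν : Fin d, MG μ ν = ((2 * β / Nc : ℝ) : ℂ) *
      ((if μ = ν then 1 else 0) * ((∑ ρ : Fin d, Real.sin (k ρ / 2) ^ 2 : ℝ) : ℂ)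
        - Complex.exp (Complex.I * ((k μ - k ν : ℝ) : ℂ) / 2) *
          ((Real.sin (k μ / 2) : ℂ)) * ((Real.sin (k ν / 2) : ℂ))))
    (y0 : Fin d → ℂ)
    (hy0 : ∀ μ : Fin d, y0 μ =
      Complex.exp (Complex.I * ((k μ : ℝ) : ℂ) / 2) * ((Real.sin (k μ / 2) : ℂ))) :
    MG *ᵥ y0 = 0 := by
  have hnorm : star y0 ⬝ᵥ y0 = ((∑ ρ : Fin d, Real.sin (k ρ / 2) ^ 2 : ℝ) : ℂ) := by
    rw [ofReal_sum]
    refine Finset.sum_congr rfl fun ρ _ => ?_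
    rw [Pi.star_apply, hy0, star_mul', star_ofReal, ofReal_pow]
    linear_combination (Real.sin (k ρ / 2) : ℂ) ^ 2 * exp_I_mul_ofReal_div_two_mul_star (k ρ)
  have hMG_factor : MG = ((2 * β / Nc : ℝ) : ℂ) •
      ((star y0 ⬝ᵥ y0) • (1 : Matrix (Fin d) (Fin d) ℂ) - vecMulVec y0 (star y0)) := by
    ext μ ν
    rw [hMG, hnorm, exp_I_mul_ofReal_sub_div_two]
    simp only [Matrix.smul_apply, Matrix.sub_apply, one_apply, vecMulVec_apply, Pi.star_apply, hy0,
      star_mul', star_ofReal, smul_eq_mul]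
    ring
  rw [hMG_factor, smul_mulVec, dotProduct_smul_one_sub_vecMulVec_mulVec_self, smul_zero]

/-- The gauge zero mode: the vector `(y⁰_k)_μ = e^{ik_μ/2} sin(k_μ/2)` is
annihilated by the harmonic gauge matrix `M_G(k)`. -/
theorem gauge_matrix_zero_mode {d : ℕ} (hd : 1 ≤ d) (β : ℝ) (hβ : 0 < β)
    (Nc : ℕ) (hNc : 1 ≤ Nc) (k : Fin d → ℝ)
    (MG : Matrix (Fin d) (Fin d) ℂ)
    (hMG : ∀ μ ν : Fin d, MG μ ν = ((2 * β / Nc : ℝ) : ℂ) *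
      ((if μ = ν then 1 else 0) * ((∑ ρ : Fin d, Real.sin (k ρ / 2) ^ 2 : ℝ) : ℂ)
        - Complex.exp (Complex.I * ((k μ - k ν : ℝ) : ℂ) / 2) *
          ((Real.sin (k μ / 2) : ℂ)) * ((Real.sin (k ν / 2) : ℂ))))
    (y0 : Fin d → ℂ)
    (hy0 : ∀ μ : Fin d, y0 μ =
      Complex.exp (Complex.I * ((k μ : ℝ) : ℂ) / 2) * ((Real.sin (k μ / 2) : ℂ))) :
    MG *ᵥ y0 = 0 :=
  gauge_matrix_zero_mode_general β Nc k MG hMG y0 hy0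
end

section
/- Let d ≥ 2, β > 0, N_c ≥ 1, and k ∈ ℝᵈ, and let M_G(k) be the complex d×d matrix with entries M_G(k)_{μν} = (2β/N_c)·[δ_{μν}·∑_{ρ=1}^{d} sin²(k_ρ/2) − exp(i(k_μ − k_ν)/2)·sin(k_μ/2)·sin(k_ν/2)]. Fix indices α ≠ i in {1,…,d} with sin(k_α/2) ≠ 0, and define y ∈ ℂᵈ by y_α = exp(i k_α/2)·sin(k_i/2), y_i = −exp(i k_i/2)·sin(k_α/2), and y_μ = 0 for μ ∉ {α, i}. Then M_G(k)·y = (2β/N_c)·(∑_{ρ=1}^{d} sin²(k_ρ/2))·y. -/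
open Matrix Complex

/-!
Writing `v_μ = e^{ik_μ/2} sin(k_μ/2)` and `w_ν = e^{-ik_ν/2} sin(k_ν/2)`, the harmonic gauge
matrix is the rank-one perturbation `M_G(k) = (2β/N_c) (S·1 − v wᵀ)` of a scalar matrix, with
`S = ∑_ρ sin²(k_ρ/2)`. The vector `y` is orthogonal to `w` (the two terms of `w ⬝ᵥ y` are both
`sin(k_α/2) sin(k_i/2)`, with opposite signs), so the rank-one part annihilates it.
-/

lemma smul_one_sub_vecMulVec_mulVec_of_dotProduct_eq_zero {n R : Type*} [Fintype n]
    [DecidableEq n] [CommRing R] (a : R) (v w y : n → R) (h : w ⬝ᵥ y = 0) :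
    (a • (1 : Matrix n n R) - vecMulVec v w) *ᵥ y = a • y := by
  rw [sub_mulVec, smul_mulVec, one_mulVec, vecMulVec_mulVec, h, MulOpposite.op_zero, zero_smul, sub_zero]

lemma dotProduct_eq_add_of_support_subset_pair {n R : Type*} [Fintype n] [CommRing R]
    {a b : n} (hab : a ≠ b) (w y : n → R) (hy : ∀ μ, μ ≠ a → μ ≠ b → y μ = 0) :
    w ⬝ᵥ y = w a * y a + w b * y b :=
  Finset.sum_eq_add a b hab (fun μ _ hμ => by rw [hy μ hμ.1 hμ.2, mul_zero])
    (fun h => absurd (Finset.mem_univ a) h) (fun h => absurd (Finset.mem_univ b) h)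

lemma exp_I_mul_sub_div_two (x y : ℝ) :
    exp (I * ((x - y : ℝ) : ℂ) / 2) = exp (I * x / 2) * exp (-(I * y / 2)) := by
  rw [← Complex.exp_add]
  congr 1
  push_cast
  ring

lemma exp_neg_I_mul_div_two_mul_exp_I_mul_div_two (x : ℝ) :
    exp (-(I * x / 2)) * exp (I * x / 2) = 1 := by
  rw [← Complex.exp_add, neg_add_cancel, Complex.exp_zero]

theorem gauge_matrix_nonzero_mode_general {d : ℕ} (β : ℝ)
    (Nc : ℕ) (k : Fin d → ℝ)
    (MG : Matrix (Fin d) (Fin d) ℂ)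
    (hMG : ∀ μ ν : Fin d, MG μ ν = ((2 * β / Nc : ℝ) : ℂ) *
      ((if μ = ν then 1 else 0) * ((∑ ρ : Fin d, Real.sin (k ρ / 2) ^ 2 : ℝ) : ℂ)
        - Complex.exp (Complex.I * ((k μ - k ν : ℝ) : ℂ) / 2) *
          ((Real.sin (k μ / 2) : ℂ)) * ((Real.sin (k ν / 2) : ℂ))))
    (α i : Fin d) (hαi : α ≠ i)
    (y : Fin d → ℂ)
    (hyα : y α = Complex.exp (Complex.I * ((k α : ℝ) : ℂ) / 2) * ((Real.sin (k i / 2) : ℂ)))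
    (hyi : y i = -(Complex.exp (Complex.I * ((k i : ℝ) : ℂ) / 2) * ((Real.sin (k α / 2) : ℂ))))
    (hy0 : ∀ μ : Fin d, μ ≠ α → μ ≠ i → y μ = 0) :
    MG *ᵥ y = (((2 * β / Nc) * (∑ ρ : Fin d, Real.sin (k ρ / 2) ^ 2) : ℝ) : ℂ) • y := by
  set c : ℂ := ((2 * β / Nc : ℝ) : ℂ)
  set S : ℂ := ((∑ ρ : Fin d, Real.sin (k ρ / 2) ^ 2 : ℝ) : ℂ)
  set v : Fin d → ℂ := fun μ => exp (I * k μ / 2) * Real.sin (k μ / 2)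
  set w : Fin d → ℂ := fun ν => exp (-(I * k ν / 2)) * Real.sin (k ν / 2)
  have hMG_eq : MG = c • (S • (1 : Matrix (Fin d) (Fin d) ℂ) - vecMulVec v w) := by
    ext μ ν
    rw [hMG, exp_I_mul_sub_div_two]
    simp only [Matrix.smul_apply, Matrix.sub_apply, one_apply, vecMulVec_apply, v, w, smul_eq_mul]
    ring
  have hwy : w ⬝ᵥ y = 0 := by
    rw [dotProduct_eq_add_of_support_subset_pair hαi w y hy0, hyα, hyi]
    linear_combination (Real.sin (k α / 2) * Real.sin (k i / 2) : ℂ) *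
      (exp_neg_I_mul_div_two_mul_exp_I_mul_div_two (k α) -
        exp_neg_I_mul_div_two_mul_exp_I_mul_div_two (k i))
  rw [hMG_eq, smul_mulVec, smul_one_sub_vecMulVec_mulVec_of_dotProduct_eq_zero S v w y hwy,
    smul_smul, Complex.ofReal_mul]

/-- The non-zero eigenmodes of the harmonic gauge matrix: the vector
`y = e^{ik_α/2} sin(k_i/2) ê_α − e^{ik_i/2} sin(k_α/2) ê_i` (for `α ≠ i` with
`sin(k_α/2) ≠ 0`) is an eigenvector of `M_G(k)` with eigenvalue
`(2β/N_c)·∑_ρ sin²(k_ρ/2)`. -/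
theorem gauge_matrix_nonzero_mode {d : ℕ} (hd : 2 ≤ d) (β : ℝ) (hβ : 0 < β)
    (Nc : ℕ) (hNc : 1 ≤ Nc) (k : Fin d → ℝ)
    (MG : Matrix (Fin d) (Fin d) ℂ)
    (hMG : ∀ μ ν : Fin d, MG μ ν = ((2 * β / Nc : ℝ) : ℂ) *
      ((if μ = ν then 1 else 0) * ((∑ ρ : Fin d, Real.sin (k ρ / 2) ^ 2 : ℝ) : ℂ)
        - Complex.exp (Complex.I * ((k μ - k ν : ℝ) : ℂ) / 2) *
          ((Real.sin (k μ / 2) : ℂ)) * ((Real.sin (k ν / 2) : ℂ))))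
    (α i : Fin d) (hαi : α ≠ i) (hkα : Real.sin (k α / 2) ≠ 0)
    (y : Fin d → ℂ)
    (hyα : y α = Complex.exp (Complex.I * ((k α : ℝ) : ℂ) / 2) * ((Real.sin (k i / 2) : ℂ)))
    (hyi : y i = -(Complex.exp (Complex.I * ((k i : ℝ) : ℂ) / 2) * ((Real.sin (k α / 2) : ℂ))))
    (hy0 : ∀ μ : Fin d, μ ≠ α → μ ≠ i → y μ = 0) :
    MG *ᵥ y = (((2 * β / Nc) * (∑ ρ : Fin d, Real.sin (k ρ / 2) ^ 2) : ℝ) : ℂ) • y :=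
  gauge_matrix_nonzero_mode_general β Nc k MG hMG α i hαi y hyα hyi hy0
end
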